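/- arXiv:2212.13601 — 2 statements merged into one kernel-verified Lean document; each statement's English description precedes it below -/
import Mathlib

section
/- For 0 < q < 1 and -1 < α < q, the discrete measure ρ_{q,α} = (-α;q)_∞ (q;q)_∞ ∑_{n=0}^∞ (q^n/(q;q)_n) h_n(-α q^{-1}|q) δ_{(1-q)^{-1/2} q^{n/2}} solves the moment problem ∫_0^∞ r^{2m} dρ_{q,α}(r) = (-α;q)_m [m]_q! for every natural number m, where h_n(z|q) = ∑_{k=0}^n ((q;q)_n/((q;q)_k (q;q)_{n-k})) z^k are the Rogers–Szegő polynomials. -/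
/-- q-Pochhammer symbol `(a;q)_n`. -/
noncomputable def qPoch (a q : ℝ) (n : ℕ) : ℝ := ∏ j ∈ Finset.range n, (1 - a * q ^ j)

/-- infinite q-Pochhammer symbol `(a;q)_∞`. -/
noncomputable def qPochInf (a q : ℝ) : ℝ := ∏' j : ℕ, (1 - a * q ^ j)

/-- q-factorial `[m]_q!`. -/
noncomputable def qFact (q : ℝ) (m : ℕ) : ℝ :=
  ∏ k ∈ Finset.range m, ((1 - q ^ (k + 1)) / (1 - q))

/-- Rogers–Szegő polynomial `h_n(z|q)`. -/
noncomputable def rogersSzego (q : ℝ) (n : ℕ) (z : ℝ) : ℝ :=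
  ∑ k ∈ Finset.range (n + 1),
    (qPoch q q n / (qPoch q q k * qPoch q q (n - k))) * z ^ k

/-!
Euler's q-exponential `e_q(x) = ∑ xⁿ/(q;q)ₙ` satisfies `e_q(qx) = (1 - x) e_q(x)`, hence
`(x;q)_N e_q(x) = e_q(q^N x) → 1`, i.e. `e_q(x) = 1/(x;q)_∞`, and consequently
`(x;q)_∞ e_q(q^m x) = (x;q)_m`. The Cauchy product of `e_q(t)` and `e_q(zt)` is the generating
function `∑ hₙ(z|q) tⁿ/(q;q)ₙ` of the Rogers–Szegő polynomials. The `2m`-th power of the atom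
`(1-q)^{-1/2} q^{n/2}` is `q^{nm}/(1-q)^m`, so the moment is `(1-q)^{-m} e_q(q^{m+1}) e_q(-α q^m)`,
and the two infinite products in front turn the two q-exponentials into `(q;q)_m (-α;q)_m`.
-/

open Finset Filter Topology

noncomputable def qExp (q x : ℝ) : ℝ := ∑' n : ℕ, x ^ n / qPoch q q n

@[simp]
lemma qPoch_zero (a q : ℝ) : qPoch a q 0 = 1 := prod_range_zero _

lemma qPoch_succ (a q : ℝ) (n : ℕ) : qPoch a q (n + 1) = qPoch a q n * (1 - a * q ^ n) :=
  prod_range_succ _ _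

lemma qFact_eq_qPoch_div (q : ℝ) (m : ℕ) : qFact q m = qPoch q q m / (1 - q) ^ m := by
  simp only [qFact, qPoch, prod_div_distrib, prod_const, card_range, pow_succ']

lemma abs_mul_pow_lt_one {x q : ℝ} (hx : |x| < 1) (hq : |q| ≤ 1) (n : ℕ) : |x * q ^ n| < 1 := by
  rw [abs_mul, abs_pow]
  exact lt_of_le_of_lt (mul_le_of_le_one_right (abs_nonneg x) (pow_le_one₀ (abs_nonneg q) hq)) hx

lemma one_sub_mul_pow_pos {x q : ℝ} (hx : |x| < 1) (hq : |q| ≤ 1) (n : ℕ) :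
    0 < 1 - x * q ^ n :=
  sub_pos.mpr (abs_lt.mp (abs_mul_pow_lt_one hx hq n)).2

lemma qPoch_pos {x q : ℝ} (hx : |x| < 1) (hq : |q| ≤ 1) (n : ℕ) : 0 < qPoch x q n :=
  prod_pos fun j _ ↦ one_sub_mul_pow_pos hx hq j

lemma multipliable_one_sub_mul_pow {q : ℝ} (hq : |q| < 1) (x : ℝ) :
    Multipliable fun j : ℕ ↦ 1 - x * q ^ j := by
  simpa only [sub_eq_add_neg] using
    Real.multipliable_one_add_of_summable ((summable_geometric_of_abs_lt_one hq).mul_left x).neg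

@[simp]
lemma qExp_zero {q : ℝ} : qExp q 0 = 1 := by
  rw [qExp, tsum_eq_single 0 fun n hn ↦ by simp [zero_pow hn]]
  simp

lemma qExp_eq_one_add {q : ℝ} (x : ℝ) (hs : Summable fun n : ℕ ↦ x ^ n / qPoch q q n) :
    qExp q x = 1 + ∑' n : ℕ, x ^ (n + 1) / qPoch q q (n + 1) := by
  rw [qExp, hs.tsum_eq_zero_add]
  simp

section qExp

variable {q : ℝ} (hq : |q| < 1)
include hq

lemma norm_qExp_term (x : ℝ) (n : ℕ) : ‖x ^ n / qPoch q q n‖ = |x| ^ n / qPoch q q n := by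
  rw [Real.norm_eq_abs, abs_div, abs_pow, abs_of_pos (qPoch_pos hq hq.le n)]

lemma summable_qExp_term {x : ℝ} (hx : |x| < 1) : Summable fun n : ℕ ↦ x ^ n / qPoch q q n := by
  have hratio : Tendsto (fun n : ℕ ↦ |x| / (1 - q * q ^ n)) atTop (𝓝 (|x| / (1 - q * 0))) :=
    tendsto_const_nhds.div
      (tendsto_const_nhds.sub ((tendsto_pow_atTop_nhds_zero_of_abs_lt_one hq).const_mul q))
      (by simp)
  rw [mul_zero, sub_zero, div_one] at hratio
  obtain ⟨r, hxr, hr1⟩ := exists_between hx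
  refine summable_of_ratio_norm_eventually_le hr1 ?_
  filter_upwards [hratio.eventually (gt_mem_nhds hxr)] with n hn
  have hfac := one_sub_mul_pow_pos hq hq.le n
  calc ‖x ^ (n + 1) / qPoch q q (n + 1)‖
      = |x| / (1 - q * q ^ n) * ‖x ^ n / qPoch q q n‖ := by
        rw [norm_qExp_term hq, norm_qExp_term hq, qPoch_succ, pow_succ]
        field_simp
    _ ≤ r * ‖x ^ n / qPoch q q n‖ := by gcongr

lemma summable_norm_qExp_term {x : ℝ} (hx : |x| < 1) :
    Summable fun n : ℕ ↦ ‖x ^ n / qPoch q q n‖ := by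
  simpa only [norm_qExp_term hq] using summable_qExp_term hq (x := |x|) (by rwa [abs_abs])

lemma qExp_mul_left {x : ℝ} (hx : |x| < 1) : qExp q (q * x) = (1 - x) * qExp q x := by
  have hqx : |q * x| < 1 := by simpa [mul_comm] using abs_mul_pow_lt_one hx hq.le 1
  have hsx := summable_qExp_term hq hx
  have hsqx := summable_qExp_term hq hqx
  -- `(xⁿ⁺¹ - (qx)ⁿ⁺¹) / (q;q)ₙ₊₁ = x · xⁿ / (q;q)ₙ` since `(q;q)ₙ₊₁ = (q;q)ₙ (1 - qⁿ⁺¹)`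
  have hdiff : ∑' n : ℕ, (x ^ (n + 1) / qPoch q q (n + 1) - (q * x) ^ (n + 1) / qPoch q q (n + 1))
      = x * qExp q x := by
    rw [qExp, ← tsum_mul_left]
    refine tsum_congr fun n ↦ ?_
    have hfac := (one_sub_mul_pow_pos hq hq.le n).ne'
    have hP := (qPoch_pos hq hq.le n).ne'
    rw [qPoch_succ]
    field_simp
    ring
  rw [Summable.tsum_sub ((summable_nat_add_iff 1).mpr hsx) ((summable_nat_add_iff 1).mpr hsqx),
    ← add_sub_cancel_left 1 (∑' n : ℕ, x ^ (n + 1) / qPoch q q (n + 1)),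
    ← add_sub_cancel_left 1 (∑' n : ℕ, (q * x) ^ (n + 1) / qPoch q q (n + 1)),
    ← qExp_eq_one_add x hsx, ← qExp_eq_one_add _ hsqx] at hdiff
  linarith

lemma qPoch_mul_qExp {x : ℝ} (hx : |x| < 1) (N : ℕ) :
    qPoch x q N * qExp q x = qExp q (q ^ N * x) := by
  induction N with
  | zero => simp
  | succ N ih =>
    rw [qPoch_succ, mul_right_comm, ih, pow_succ', mul_assoc,
      qExp_mul_left hq (by simpa [mul_comm] using abs_mul_pow_lt_one hx hq.le N)]
    ring

lemma tendsto_qExp_pow_mul (x : ℝ) (hx : |x| < 1) :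
    Tendsto (fun N : ℕ ↦ qExp q (q ^ N * x)) atTop (𝓝 1) := by
  have hlim : ∀ n : ℕ, Tendsto (fun N : ℕ ↦ (q ^ N * x) ^ n / qPoch q q n) atTop
      (𝓝 ((0 : ℝ) ^ n / qPoch q q n)) := fun n ↦ by
    simpa using (((tendsto_pow_atTop_nhds_zero_of_abs_lt_one hq).mul_const x).pow n).div_const _
  have hbound : ∀ N n : ℕ, ‖(q ^ N * x) ^ n / qPoch q q n‖ ≤ |x| ^ n / qPoch q q n := by
    intro N n
    have hqx : |q ^ N * x| ≤ |x| := by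
      rw [abs_mul, abs_pow]
      exact mul_le_of_le_one_left (abs_nonneg x) (pow_le_one₀ (abs_nonneg q) hq.le)
    rw [norm_qExp_term hq]
    exact div_le_div_of_nonneg_right (pow_le_pow_left₀ (abs_nonneg _) hqx n)
      (qPoch_pos hq hq.le n).le
  rw [← qExp_zero (q := q)]
  exact tendsto_tsum_of_dominated_convergence
    (summable_qExp_term hq (x := |x|) (by rwa [abs_abs])) hlim (Eventually.of_forall hbound)

lemma qPochInf_mul_qExp {x : ℝ} (hx : |x| < 1) : qPochInf x q * qExp q x = 1 :=
  tendsto_nhds_unique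
    ((multipliable_one_sub_mul_pow hq x).hasProd.tendsto_prod_nat.mul_const (qExp q x))
    ((tendsto_qExp_pow_mul hq x hx).congr fun N ↦ (qPoch_mul_qExp hq hx N).symm)

lemma qPoch_eq_qPochInf_mul_qExp {x : ℝ} (hx : |x| < 1) (m : ℕ) :
    qPoch x q m = qPochInf x q * qExp q (q ^ m * x) := by
  rw [← qPoch_mul_qExp hq hx, mul_left_comm, qPochInf_mul_qExp hq hx, mul_one]

lemma hasSum_rogersSzego {z t : ℝ} (ht : |t| < 1) (hzt : |z * t| < 1) :
    HasSum (fun n : ℕ ↦ rogersSzego q n z * t ^ n / qPoch q q n) (qExp q (z * t) * qExp q t) := by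
  have hcauchy : ∀ n : ℕ, rogersSzego q n z * t ^ n / qPoch q q n
      = ∑ k ∈ range (n + 1), (z * t) ^ k / qPoch q q k * (t ^ (n - k) / qPoch q q (n - k)) := by
    intro n
    rw [rogersSzego, sum_mul, sum_div]
    refine sum_congr rfl fun k hk ↦ ?_
    have hkn : k ≤ n := Nat.lt_succ_iff.mp (mem_range.mp hk)
    have hPn := (qPoch_pos hq hq.le n).ne'
    have hPk := (qPoch_pos hq hq.le k).ne'
    have hPnk := (qPoch_pos hq hq.le (n - k)).ne'
    rw [← pow_mul_pow_sub t hkn]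
    field_simp
    ring
  simpa only [hcauchy, qExp] using hasSum_sum_range_mul_of_summable_norm
    (summable_norm_qExp_term hq hzt) (summable_norm_qExp_term hq ht)

end qExp

/-- The discrete measure `ρ_{q,α}` supported at the points `(1-q)^{-1/2} q^{n/2}` with
weights `(-α;q)_∞ (q;q)_∞ (q^n/(q;q)_n) h_n(-α/q|q)` solves the moment problem
`∫ r^{2m} ρ_{q,α}(dr) = (-α;q)_m [m]_q!`. -/
theorem moment_problem_solution (q α : ℝ) (hq : 0 < q) (hq1 : q < 1)
    (hα : -1 < α) (hαq : α < q) (m : ℕ) :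
    Summable (fun n : ℕ =>
        (q ^ n / qPoch q q n) * rogersSzego q n (-α / q) *
          ((Real.sqrt (1 - q))⁻¹ * Real.sqrt q ^ n) ^ (2 * m)) ∧
    qPochInf (-α) q * qPochInf q q *
        ∑' n : ℕ, (q ^ n / qPoch q q n) * rogersSzego q n (-α / q) *
          ((Real.sqrt (1 - q))⁻¹ * Real.sqrt q ^ n) ^ (2 * m)
      = qPoch (-α) q m * qFact q m := by
  have hq' : |q| < 1 := abs_lt.mpr ⟨by linarith, hq1⟩
  have hα' : |-α| < 1 := by rw [abs_neg, abs_lt]; constructor <;> linarith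
  have ht : |q ^ (m + 1)| < 1 := by
    rw [abs_pow]
    exact pow_lt_one₀ (abs_nonneg q) hq' (Nat.succ_ne_zero m)
  have hzt : -α / q * q ^ (m + 1) = q ^ m * -α := by field_simp; ring
  have hterm : ∀ n : ℕ, (q ^ n / qPoch q q n) * rogersSzego q n (-α / q) *
      ((Real.sqrt (1 - q))⁻¹ * Real.sqrt q ^ n) ^ (2 * m)
      = ((1 - q) ^ m)⁻¹ * (rogersSzego q n (-α / q) * (q ^ (m + 1)) ^ n / qPoch q q n) := by
    intro n
    have hatom : ((Real.sqrt (1 - q))⁻¹ * Real.sqrt q ^ n) ^ 2 = q ^ n / (1 - q) := by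
      rw [mul_pow, inv_pow, Real.sq_sqrt (by linarith), ← pow_mul, mul_comm n, pow_mul,
        Real.sq_sqrt hq.le]
      ring
    rw [pow_mul, hatom]
    ring
  have hsum := (hasSum_rogersSzego hq' ht
    (by rw [hzt, mul_comm]; exact abs_mul_pow_lt_one hα' hq'.le m)).mul_left ((1 - q) ^ m)⁻¹
  simp only [← hterm] at hsum
  refine ⟨hsum.summable, ?_⟩
  rw [hsum.tsum_eq, hzt, qFact_eq_qPoch_div, qPoch_eq_qPochInf_mul_qExp hq' hα' m,
    qPoch_eq_qPochInf_mul_qExp hq' hq' m, ← pow_succ]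
  ring
end

section
/- For 0 < q < 1 and 0 ≤ α < q, the series expansion of the coherent state wave function ∑_{n=0}^∞ (z̄√(1-q))^n/((-α;q)_n (q;q)_n) Q_n(cos θ; √α, -√α|q) equals (1/((z̄√(1-q) e^{iθ};q)_∞)) ₂φ₁(√α e^{iθ}, -√α e^{iθ}; -α | q; z̄√(1-q) e^{-iθ}) for |z̄√(1-q)| < 1 and θ ∈ [0, π]. -/
open Complex

/-- q-Pochhammer symbol `(a;q)_n` with complex `a` and real `q`. -/
noncomputable def qPochC (a : ℂ) (q : ℝ) (n : ℕ) : ℂ :=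
  ∏ j ∈ Finset.range n, (1 - a * (q : ℂ) ^ j)

open Finset Filter Topology

/-! The right-hand side is the Cauchy product of Euler's series `∑ xᵏ/(q;q)ₖ = 1/(x;q)_∞` at
`x = W e^{iθ}`, `W = z̄√(1-q)`, with the ₂φ₁ series at `y = W e^{-iθ}`. Both coefficient sequences
obey first-order q-recurrences (for the ₂φ₁ one because `(s;q)ⱼ(-s;q)ⱼ = (s²;q²)ⱼ`), and a
telescoping sum turns these into the three-term recurrence for `(-α;q)ₙ(q;q)ₙ` times the n-th
Cauchy coefficient. This is the recurrence of `Wⁿ Qₙ(cos θ)`, with the same initial values `1` and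
`x + y = 2W cos θ`. Euler's identity itself follows from `e(qx) = (1 - x) e(x)`, iterated and
passed to the limit `e(qᴺx) → e(0) = 1` by dominated convergence. -/

theorem summable_norm_of_succ_eq_mul {R : Type*} [NormedRing R] {f r : ℕ → R} {L : R}
    (hf : ∀ n, f (n + 1) = r n * f n) (hr : Tendsto r atTop (𝓝 L)) (hL : ‖L‖ < 1) :
    Summable fun n => ‖f n‖ := by
  refine summable_of_ratio_norm_eventually_le (r := (1 + ‖L‖) / 2) (by linarith) ?_
  filter_upwards [hr.norm.eventually_le_const (by linarith : ‖L‖ < (1 + ‖L‖) / 2)] with n hn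
  rw [norm_norm, norm_norm, hf]
  exact (norm_mul_le _ _).trans (mul_le_mul_of_nonneg_right hn (norm_nonneg _))

section QPochhammer

variable {q : ℝ}

@[simp] theorem qPochC_zero (a : ℂ) (q : ℝ) : qPochC a q 0 = 1 := prod_range_zero _

theorem qPochC_succ (a : ℂ) (q : ℝ) (n : ℕ) :
    qPochC a q (n + 1) = qPochC a q n * (1 - a * (q : ℂ) ^ n) := prod_range_succ _ _

theorem one_sub_mul_ofReal_pow_ne_zero {a : ℂ} (ha : ‖a‖ < 1) (hq : |q| ≤ 1) (j : ℕ) :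
    1 - a * (q : ℂ) ^ j ≠ 0 := by
  have hlt : ‖a * (q : ℂ) ^ j‖ < 1 := by
    rw [norm_mul, norm_pow, norm_real, Real.norm_eq_abs]
    exact (mul_le_of_le_one_right (norm_nonneg a) (pow_le_one₀ (abs_nonneg q) hq)).trans_lt ha
  intro h
  simp [← (sub_eq_zero.mp h)] at hlt

theorem qPochC_ne_zero_of_norm_lt_one {a : ℂ} (ha : ‖a‖ < 1) (hq : |q| ≤ 1) (n : ℕ) :
    qPochC a q n ≠ 0 :=
  prod_ne_zero_iff.mpr fun j _ => one_sub_mul_ofReal_pow_ne_zero ha hq j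

theorem qPochC_self_ne_zero (hq : |q| < 1) (n : ℕ) : qPochC q q n ≠ 0 :=
  qPochC_ne_zero_of_norm_lt_one (by simpa using hq) hq.le n

theorem one_add_mul_pow_ne_zero {α : ℝ} (hα : 0 ≤ α) (hq : 0 ≤ q) (j : ℕ) :
    1 + (α : ℂ) * (q : ℂ) ^ j ≠ 0 := by
  exact_mod_cast (by positivity : (0 : ℝ) < 1 + α * q ^ j).ne'

theorem qPochC_neg_ne_zero {α : ℝ} (hα : 0 ≤ α) (hq : 0 ≤ q) (n : ℕ) :
    qPochC (-α : ℝ) q n ≠ 0 :=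
  prod_ne_zero_iff.mpr fun j _ => by simpa using one_add_mul_pow_ne_zero hα hq j

theorem tendsto_ofReal_pow_atTop_nhds_zero (hq : |q| < 1) :
    Tendsto (fun n : ℕ => (q : ℂ) ^ n) atTop (𝓝 0) :=
  tendsto_pow_atTop_nhds_zero_of_norm_lt_one (by rwa [norm_real, Real.norm_eq_abs])

theorem tendsto_one_sub_mul_ofReal_pow (hq : |q| < 1) (d : ℂ) :
    Tendsto (fun n : ℕ => 1 - d * (q : ℂ) ^ n) atTop (𝓝 1) := by
  simpa using tendsto_const_nhds.sub ((tendsto_ofReal_pow_atTop_nhds_zero hq).const_mul d)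

end QPochhammer

section Euler

variable {q : ℝ}

theorem summable_norm_pow_div_qPochC (hq : |q| < 1) {x : ℂ} (hx : ‖x‖ < 1) :
    Summable fun m => ‖x ^ m / qPochC q q m‖ := by
  refine summable_norm_of_succ_eq_mul (r := fun m => x / (1 - q * (q : ℂ) ^ m)) (fun m => ?_) ?_ hx
  · simp only [qPochC_succ, div_eq_mul_inv, mul_inv]; ring
  · simpa [Pi.div_def] using
      tendsto_const_nhds.div (tendsto_one_sub_mul_ofReal_pow hq q) one_ne_zero

theorem pow_div_qPochC_succ (hq : |q| < 1) (x : ℂ) (k : ℕ) :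
    (1 - (q : ℂ) ^ (k + 1)) * (x ^ (k + 1) / qPochC q q (k + 1)) = x * (x ^ k / qPochC q q k) := by
  have h1 := one_sub_mul_ofReal_pow_ne_zero (a := q) (by simpa using hq) hq.le k
  have h2 := qPochC_self_ne_zero hq k
  rw [qPochC_succ]
  field_simp
  ring

theorem tsum_pow_div_qPochC_ofReal_mul (hq : |q| < 1) {x : ℂ} (hx : ‖x‖ < 1) :
    ∑' m, ((q : ℂ) * x) ^ m / qPochC q q m = (1 - x) * ∑' m, x ^ m / qPochC q q m := by
  have hqx : ‖(q : ℂ) * x‖ < 1 := by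
    rw [norm_mul, norm_real, Real.norm_eq_abs]
    exact (mul_le_of_le_one_left (norm_nonneg x) hq.le).trans_lt hx
  have hf := (summable_norm_pow_div_qPochC hq hx).of_norm.hasSum
  have hg := (summable_norm_pow_div_qPochC hq hqx).of_norm.hasSum
  have hshift : HasSum (fun m => x ^ (m + 1) / qPochC q q (m + 1) -
      ((q : ℂ) * x) ^ (m + 1) / qPochC q q (m + 1)) (x * ∑' m, x ^ m / qPochC q q m) := by
    refine (hf.mul_left x).congr_fun fun m => ?_
    rw [← pow_div_qPochC_succ hq x m]
    ring
  have hdiff := (hasSum_nat_add_iff (f := fun m =>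
    x ^ m / qPochC q q m - ((q : ℂ) * x) ^ m / qPochC q q m) 1).mp hshift
  simp only [range_one, sum_singleton, pow_zero, sub_self, add_zero] at hdiff
  linear_combination -(hf.sub hg).unique hdiff

theorem norm_ofReal_pow_mul_le (hq : |q| ≤ 1) (x : ℂ) (N : ℕ) : ‖(q : ℂ) ^ N * x‖ ≤ ‖x‖ := by
  rw [norm_mul, norm_pow, norm_real, Real.norm_eq_abs]
  exact mul_le_of_le_one_left (norm_nonneg x) (pow_le_one₀ (abs_nonneg q) hq)

theorem tsum_pow_div_qPochC_mul_qPochC (hq : |q| < 1) {x : ℂ} (hx : ‖x‖ < 1) (N : ℕ) :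
    (∑' m, x ^ m / qPochC q q m) * qPochC x q N = ∑' m, ((q : ℂ) ^ N * x) ^ m / qPochC q q m := by
  induction N with
  | zero => simp
  | succ N ih =>
    rw [qPochC_succ, ← mul_assoc, ih, pow_succ', mul_assoc, tsum_pow_div_qPochC_ofReal_mul hq
      ((norm_ofReal_pow_mul_le hq.le x N).trans_lt hx)]
    ring

theorem tendsto_tsum_ofReal_pow_mul_pow_div_qPochC (hq : |q| < 1) {x : ℂ} (hx : ‖x‖ < 1) :
    Tendsto (fun N : ℕ => ∑' m, ((q : ℂ) ^ N * x) ^ m / qPochC q q m) atTop (𝓝 1) := by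
  have hlim : ∀ m, Tendsto (fun N : ℕ => ((q : ℂ) ^ N * x) ^ m / qPochC q q m) atTop
      (𝓝 ((0 * x) ^ m / qPochC q q m)) :=
    fun m => (((tendsto_ofReal_pow_atTop_nhds_zero hq).mul_const x).pow m).div_const _
  have hbound : ∀ N m, ‖((q : ℂ) ^ N * x) ^ m / qPochC q q m‖ ≤ ‖x ^ m / qPochC q q m‖ := by
    intro N m
    rw [norm_div, norm_div, norm_pow, norm_pow]
    gcongr
    exact norm_ofReal_pow_mul_le hq.le x N
  have := tendsto_tsum_of_dominated_convergence (summable_norm_pow_div_qPochC hq hx) hlim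
    (Eventually.of_forall hbound)
  rwa [tsum_eq_single 0 fun m hm => by simp [hm], pow_zero, qPochC_zero, div_one] at this

theorem multipliable_one_sub_mul_ofReal_pow (hq : |q| < 1) (x : ℂ) :
    Multipliable fun j : ℕ => 1 - x * (q : ℂ) ^ j := by
  have hs : Summable fun j : ℕ => ‖-(x * (q : ℂ) ^ j)‖ := by
    simpa [norm_mul, norm_pow] using (summable_geometric_of_lt_one (abs_nonneg q) hq).mul_left ‖x‖
  simpa [sub_eq_add_neg] using multipliable_one_add_of_summable hs

theorem hasSum_pow_div_qPochC (hq : |q| < 1) {x : ℂ} (hx : ‖x‖ < 1) :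
    HasSum (fun m => x ^ m / qPochC q q m) (∏' j : ℕ, (1 - x * (q : ℂ) ^ j))⁻¹ := by
  have hprod := (multipliable_one_sub_mul_ofReal_pow hq x).hasProd.tendsto_prod_nat
  have hone : (∑' m, x ^ m / qPochC q q m) * ∏' j : ℕ, (1 - x * (q : ℂ) ^ j) = 1 :=
    tendsto_nhds_unique (hprod.const_mul _)
      ((tendsto_tsum_ofReal_pow_mul_pow_div_qPochC hq hx).congr
        fun N => (tsum_pow_div_qPochC_mul_qPochC hq hx N).symm)
  rw [← eq_inv_of_mul_eq_one_left hone]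
  exact (summable_norm_pow_div_qPochC hq hx).of_norm.hasSum

end Euler

section CauchyRecurrence

variable {K : Type*} [CommRing K] {q α x y : K} {a b : ℕ → K}

theorem sum_range_one_sub_pow_mul_eq (ha : ∀ k, (1 - q ^ (k + 1)) * a (k + 1) = x * a k) (n : ℕ) :
    ∑ k ∈ range (n + 2), (1 - q ^ k) * a k * b (n + 1 - k) =
      x * ∑ k ∈ range (n + 1), a k * b (n - k) := by
  rw [sum_range_succ', mul_sum]
  simp only [pow_zero, sub_self, zero_mul, add_zero, Nat.add_sub_add_right, ha, mul_assoc]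

theorem mul_sum_range_succ_eq_sum_add_pow_mul (ha : ∀ k, (1 - q ^ (k + 1)) * a (k + 1) = x * a k)
    (hb : ∀ m, (1 - q ^ (m + 1)) * (1 + α * q ^ m) * b (m + 1) = (y - α * x * q ^ (2 * m)) * b m)
    (n : ℕ) :
    (1 - q ^ (n + 1)) * (1 + α * q ^ n) * ∑ k ∈ range (n + 2), a k * b (n + 1 - k) =
      ∑ k ∈ range (n + 1), (x + q ^ k * y) * a k * b (n - k) := by
  -- `G 0` is the `k = 0` term on the left and `G (n + 1) = 0`, so the sum of `G (k + 1) - G k`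
  -- accounts exactly for that term.
  set G : ℕ → K := fun k => (α * q ^ n + q ^ k) * (1 - q ^ (n + 1 - k)) * a k * b (n + 1 - k)
  have hterm : ∀ k ∈ range (n + 1), (1 - q ^ (n + 1)) * (1 + α * q ^ n) * (a (k + 1) * b (n - k)) =
      (x + q ^ k * y) * a k * b (n - k) + (G (k + 1) - G k) := by
    intro k hk
    obtain ⟨m, rfl⟩ : ∃ m, n = k + m := ⟨n - k, by grind⟩
    simp only [G, show k + m + 1 - k = m + 1 by omega, show k + m + 1 - (k + 1) = m by omega,
      Nat.add_sub_cancel_left]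
    linear_combination (q ^ k * a k) * hb m + (b m * (1 + α * q ^ (k + 2 * m))) * ha k
  rw [sum_range_succ', mul_add, mul_sum]
  simp only [Nat.add_sub_add_right]
  rw [sum_congr rfl hterm, sum_add_distrib, sum_range_sub]
  simp only [G, Nat.sub_zero, Nat.sub_self, pow_zero]
  ring

theorem sum_range_three_term_recurrence (ha : ∀ k, (1 - q ^ (k + 1)) * a (k + 1) = x * a k)
    (hb : ∀ m, (1 - q ^ (m + 1)) * (1 + α * q ^ m) * b (m + 1) = (y - α * x * q ^ (2 * m)) * b m)
    (n : ℕ) :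
    (1 - q ^ (n + 2)) * (1 + α * q ^ (n + 1)) * ∑ k ∈ range (n + 3), a k * b (n + 2 - k) =
      (x + y) * ∑ k ∈ range (n + 2), a k * b (n + 1 - k) -
        x * y * ∑ k ∈ range (n + 1), a k * b (n - k) := by
  have hsplit : ∀ k, (x + q ^ k * y) * a k * b (n + 1 - k) =
      (x + y) * (a k * b (n + 1 - k)) - y * ((1 - q ^ k) * a k * b (n + 1 - k)) := fun k => by ring
  rw [mul_sum_range_succ_eq_sum_add_pow_mul ha hb (n + 1), sum_congr rfl fun k _ => hsplit k,
    sum_sub_distrib, ← mul_sum, ← mul_sum, sum_range_one_sub_pow_mul_eq ha]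
  ring

theorem prod_mul_sum_range_eq_of_recurrence (ha : ∀ k, (1 - q ^ (k + 1)) * a (k + 1) = x * a k)
    (hb : ∀ m, (1 - q ^ (m + 1)) * (1 + α * q ^ m) * b (m + 1) = (y - α * x * q ^ (2 * m)) * b m)
    (ha0 : a 0 = 1) (hb0 : b 0 = 1) {c : ℕ → K} (hc0 : c 0 = 1) (hc1 : c 1 = x + y)
    (hc : ∀ n, c (n + 2) =
      (x + y) * c (n + 1) - (1 - q ^ (n + 1)) * (1 + α * q ^ n) * (x * y) * c n) (n : ℕ) :
    (∏ j ∈ range n, (1 - q ^ (j + 1)) * (1 + α * q ^ j)) * ∑ k ∈ range (n + 1), a k * b (n - k) =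
      c n := by
  induction n using Nat.twoStepInduction with
  | zero => simp [ha0, hb0, hc0]
  | one => simpa [ha0, hb0, hc1] using mul_sum_range_succ_eq_sum_add_pow_mul ha hb 0
  | more n ih0 ih1 =>
    rw [hc, ← ih0, ← ih1, prod_range_succ, prod_range_succ]
    linear_combination (∏ j ∈ range n, (1 - q ^ (j + 1)) * (1 + α * q ^ j)) *
      (1 - q ^ (n + 1)) * (1 + α * q ^ n) * sum_range_three_term_recurrence ha hb n

end CauchyRecurrence

section TwoPhiOne

variable {q : ℝ}

theorem summable_norm_qPochC_mul_qPochC_div (hq : |q| < 1) (a b c : ℂ) {t : ℂ} (ht : ‖t‖ < 1) :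
    Summable fun k => ‖qPochC a q k * qPochC b q k / (qPochC c q k * qPochC q q k) * t ^ k‖ := by
  refine summable_norm_of_succ_eq_mul (r := fun k => (1 - a * (q : ℂ) ^ k) * (1 - b * (q : ℂ) ^ k) /
    ((1 - c * (q : ℂ) ^ k) * (1 - q * (q : ℂ) ^ k)) * t) (fun k => ?_) ?_ ht
  · simp only [qPochC_succ, div_eq_mul_inv, mul_inv]; ring
  · have h1 := tendsto_one_sub_mul_ofReal_pow hq
    simpa [Pi.div_def] using
      (((h1 a).mul (h1 b)).div ((h1 c).mul (h1 q)) (by norm_num)).mul_const t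

end TwoPhiOne

section CoherentState

variable {q α : ℝ}

theorem qPochC_mul_qPochC_neg_div_succ (hq : 0 ≤ q) (hq1 : q < 1) (hα : 0 ≤ α) {s x y : ℂ}
    (hs : s ^ 2 * y = α * x) (m : ℕ) :
    (1 - (q : ℂ) ^ (m + 1)) * (1 + α * (q : ℂ) ^ m) *
        (qPochC s q (m + 1) * qPochC (-s) q (m + 1) /
          (qPochC (-α : ℝ) q (m + 1) * qPochC q q (m + 1)) * y ^ (m + 1)) =
      (y - α * x * (q : ℂ) ^ (2 * m)) *
        (qPochC s q m * qPochC (-s) q m / (qPochC (-α : ℝ) q m * qPochC q q m) * y ^ m) := by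
  have hq' : |q| < 1 := abs_lt.mpr ⟨by linarith, hq1⟩
  have hC : qPochC s q (m + 1) * qPochC (-s) q (m + 1) =
      qPochC s q m * qPochC (-s) q m * (1 - s ^ 2 * (q : ℂ) ^ (2 * m)) := by
    rw [qPochC_succ, qPochC_succ]; ring
  have hD : qPochC (-α : ℝ) q (m + 1) * qPochC q q (m + 1) =
      qPochC (-α : ℝ) q m * qPochC q q m * ((1 - (q : ℂ) ^ (m + 1)) * (1 + α * (q : ℂ) ^ m)) := by
    rw [qPochC_succ, qPochC_succ]; push_cast; ring
  have hd : (1 - (q : ℂ) ^ (m + 1)) * (1 + α * (q : ℂ) ^ m) ≠ 0 :=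
    mul_ne_zero (by simpa [pow_succ'] using
      one_sub_mul_ofReal_pow_ne_zero (a := q) (by simpa using hq') hq'.le m)
      (one_add_mul_pow_ne_zero hα hq m)
  have hD0 : qPochC (-α : ℝ) q m * qPochC q q m ≠ 0 :=
    mul_ne_zero (qPochC_neg_ne_zero hα hq m) (qPochC_self_ne_zero hq' m)
  rw [hC, hD, ← hs]
  generalize qPochC (-α : ℝ) q m * qPochC q q m = D at hD0 ⊢
  generalize (1 - (q : ℂ) ^ (m + 1)) * (1 + α * (q : ℂ) ^ m) = d at hd ⊢
  field_simp
  ring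

theorem sum_range_pow_div_qPochC_mul_eq (hq : 0 ≤ q) (hq1 : q < 1) (hα : 0 ≤ α)
    (Q : ℕ → ℝ → ℝ) (hQ0 : ∀ x, Q 0 x = 1) (hQ1 : ∀ x, Q 1 x = 2 * x)
    (hQrec : ∀ n : ℕ, ∀ x,
      2 * x * Q (n + 1) x = Q (n + 2) x + (1 - q ^ (n + 1)) * (1 + α * q ^ n) * Q n x)
    (X : ℝ) {W x y s : ℂ} (hxy : x * y = W ^ 2) (hadd : x + y = 2 * X * W)
    (hs : s ^ 2 * y = α * x) (n : ℕ) :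
    ∑ k ∈ range (n + 1), x ^ k / qPochC q q k *
        (qPochC s q (n - k) * qPochC (-s) q (n - k) /
          (qPochC (-α : ℝ) q (n - k) * qPochC q q (n - k)) * y ^ (n - k)) =
      W ^ n / (qPochC (-α : ℝ) q n * qPochC q q n) * (Q n X : ℂ) := by
  have hq' : |q| < 1 := abs_lt.mpr ⟨by linarith, hq1⟩
  have hD : qPochC (-α : ℝ) q n * qPochC q q n =
      ∏ j ∈ range n, (1 - (q : ℂ) ^ (j + 1)) * (1 + α * (q : ℂ) ^ j) := by
    simp only [qPochC, ← prod_mul_distrib]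
    refine prod_congr rfl fun j _ => ?_
    push_cast
    ring
  have hne : qPochC (-α : ℝ) q n * qPochC q q n ≠ 0 :=
    mul_ne_zero (qPochC_neg_ne_zero hα hq n) (qPochC_self_ne_zero hq' n)
  rw [div_mul_eq_mul_div, eq_div_iff hne, mul_comm, hD]
  refine prod_mul_sum_range_eq_of_recurrence (a := fun k => x ^ k / qPochC q q k)
    (b := fun j => qPochC s q j * qPochC (-s) q j / (qPochC (-α : ℝ) q j * qPochC q q j) * y ^ j)
    (c := fun n => W ^ n * (Q n X : ℂ)) (pow_div_qPochC_succ hq' x)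
    (qPochC_mul_qPochC_neg_div_succ hq hq1 hα hs) (by simp) (by simp) (by simp [hQ0])
    (by simp [hQ1, hadd]; ring) (fun n => ?_) n
  have hrec := congrArg ((↑) : ℝ → ℂ) (hQrec n X)
  push_cast at hrec
  rw [hadd, hxy]
  linear_combination (-W ^ (n + 2)) * hrec

end CoherentState

theorem coherent_state_closed_form_general (q α : ℝ) (hq : 0 < q) (hq1 : q < 1)
    (hα : 0 ≤ α)
    (Q : ℕ → ℝ → ℝ)
    (hQ0 : ∀ x, Q 0 x = 1) (hQ1 : ∀ x, Q 1 x = 2 * x)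
    (hQrec : ∀ n : ℕ, ∀ x,
      2 * x * Q (n + 1) x = Q (n + 2) x + (1 - q ^ (n + 1)) * (1 + α * q ^ n) * Q n x)
    (z : ℂ) (hz : ‖(starRingEnd ℂ) z * (Real.sqrt (1 - q) : ℝ)‖ < 1)
    (θ : ℝ) :
    HasSum
      (fun n : ℕ =>
        ((starRingEnd ℂ) z * (Real.sqrt (1 - q) : ℝ)) ^ n /
            (qPochC (-α : ℝ) q n * qPochC (q : ℝ) q n) *
          ((Q n (Real.cos θ) : ℝ) : ℂ))
      ((∏' j : ℕ,
          (1 - (starRingEnd ℂ) z * (Real.sqrt (1 - q) : ℝ) * Complex.exp (θ * I) *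
            (q : ℂ) ^ j))⁻¹ *
        ∑' k : ℕ,
          (qPochC ((Real.sqrt α : ℝ) * Complex.exp (θ * I)) q k *
              qPochC (-(Real.sqrt α : ℝ) * Complex.exp (θ * I)) q k) /
            (qPochC (-α : ℝ) q k * qPochC (q : ℝ) q k) *
            ((starRingEnd ℂ) z * (Real.sqrt (1 - q) : ℝ) * Complex.exp (-θ * I)) ^ k) := by
  set W : ℂ := (starRingEnd ℂ) z * (Real.sqrt (1 - q) : ℝ)
  have hq' : |q| < 1 := abs_lt.mpr ⟨by linarith, hq1⟩
  have hu : exp (θ * I) * exp (-θ * I) = 1 := by rw [← exp_add]; simp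
  have hx : ‖W * exp (θ * I)‖ < 1 := by rwa [norm_mul, norm_exp_ofReal_mul_I, mul_one]
  have hy : ‖W * exp (-θ * I)‖ < 1 := by
    rwa [norm_mul, ← ofReal_neg, norm_exp_ofReal_mul_I, mul_one]
  have hcauchy := hasSum_sum_range_mul_of_summable_norm (summable_norm_pow_div_qPochC hq' hx)
    (summable_norm_qPochC_mul_qPochC_div hq' (Real.sqrt α * exp (θ * I))
      (-(Real.sqrt α * exp (θ * I))) (-α : ℝ) hy)
  rw [(hasSum_pow_div_qPochC hq' hx).tsum_eq] at hcauchy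
  rw [neg_mul (Real.sqrt α : ℂ)]
  refine hcauchy.congr_fun fun n => (sum_range_pow_div_qPochC_mul_eq hq.le hq1 hα Q hQ0 hQ1 hQrec
    (Real.cos θ) ?_ ?_ ?_ n).symm
  · linear_combination W ^ 2 * hu
  · rw [ofReal_cos, two_cos]; ring
  · rw [mul_pow, ← ofReal_pow, Real.sq_sqrt hα]
    linear_combination (α * W * exp (θ * I)) * hu

/-- Closed form of the generalized q-coherent state wave function: for `|z̄√(1-q)| < 1`
and `θ ∈ [0,π]`,
`∑_n (z̄√(1-q))^n/((-α;q)_n (q;q)_n) Q_n(cos θ; √α, -√α|q)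
  = (1/((z̄√(1-q) e^{iθ};q)_∞)) ₂φ₁(√α e^{iθ}, -√α e^{iθ}; -α|q; z̄√(1-q) e^{-iθ})`,
where the Al-Salam–Chihara polynomials `Q_n` are characterized by their recurrence. -/
theorem coherent_state_closed_form (q α : ℝ) (hq : 0 < q) (hq1 : q < 1)
    (hα : 0 ≤ α) (hαq : α < q)
    (Q : ℕ → ℝ → ℝ)
    (hQ0 : ∀ x, Q 0 x = 1) (hQ1 : ∀ x, Q 1 x = 2 * x)
    (hQrec : ∀ n : ℕ, ∀ x,
      2 * x * Q (n + 1) x = Q (n + 2) x + (1 - q ^ (n + 1)) * (1 + α * q ^ n) * Q n x)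
    (z : ℂ) (hz : ‖(starRingEnd ℂ) z * (Real.sqrt (1 - q) : ℝ)‖ < 1)
    (θ : ℝ) (hθ : θ ∈ Set.Icc 0 Real.pi) :
    HasSum
      (fun n : ℕ =>
        ((starRingEnd ℂ) z * (Real.sqrt (1 - q) : ℝ)) ^ n /
            (qPochC (-α : ℝ) q n * qPochC (q : ℝ) q n) *
          ((Q n (Real.cos θ) : ℝ) : ℂ))
      ((∏' j : ℕ,
          (1 - (starRingEnd ℂ) z * (Real.sqrt (1 - q) : ℝ) * Complex.exp (θ * I) *
            (q : ℂ) ^ j))⁻¹ *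
        ∑' k : ℕ,
          (qPochC ((Real.sqrt α : ℝ) * Complex.exp (θ * I)) q k *
              qPochC (-(Real.sqrt α : ℝ) * Complex.exp (θ * I)) q k) /
            (qPochC (-α : ℝ) q k * qPochC (q : ℝ) q k) *
            ((starRingEnd ℂ) z * (Real.sqrt (1 - q) : ℝ) * Complex.exp (-θ * I)) ^ k) :=
  coherent_state_closed_form_general q α hq hq1 hα Q hQ0 hQ1 hQrec z hz θ
end
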